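/- Let x_{i_r}⋯x_{i_s} be a word in simple reflections of a Coxeter group that is not reduced, and suppose deleting a single letter x_{i_u} with r ≤ u ≤ s yields a reduced word x_{i_r}⋯x̂_{i_u}⋯x_{i_s}. Then x_{i_u} belongs to some deletion pair within x_{i_r}⋯x_{i_s}: there exists a position v ≠ u such that the segment between positions min(u,v) and max(u,v) is not reduced but deleting either of these two endpoint letters from that segment yields a reduced word. -/

import Mathlib

variable {B W : Type*} [Group W] {M : CoxeterMatrix B}

/-- The segment of the word `ω` from position `a` to position `b` (inclusive). -/
def wordSegment (ω : List B) (a b : ℕ) : List B := (ω.drop a).take (b - a + 1)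

/-- Positions `a < b` form a deletion pair in the word `ω`: the segment from `a` to `b`
is not reduced, but deleting either endpoint of that segment yields a reduced word. -/
def IsDeletionPair (cs : CoxeterSystem M W) (ω : List B) (a b : ℕ) : Prop :=
  a < b ∧ b < ω.length ∧
  ¬ cs.IsReduced (wordSegment ω a b) ∧
  cs.IsReduced (wordSegment ω a b).tail ∧
  cs.IsReduced (wordSegment ω a b).dropLast

/-!
As in the standard proof of the strong exchange property, the permutations
`(w, ε) ↦ (s w s, ε + [w = s])` of `W × ZMod 2` satisfy the Coxeter relations; their lift to `W`
shows that the parity of the number of occurrences of `t` in the right inversion sequence of a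
word depends only on the product of the word.

Let `t` be the entry of the right inversion sequence of `ω` at `u`, so that `π ω * t` is the
product of `ω.eraseIdx u`, of length `|ω| - 1 ≥ ℓ (π ω)`. Then `t` is not a right inversion of
`π ω`, so it does not occur in the inversion sequence of a reduced word for `π ω`, and hence
occurs an even number of times in that of `ω`: also at some `v ≠ u`. Deleting the letter at `u`
or at `v` then gives the same element, so the two one-endpoint deletions of the segment between
`u` and `v` have the same product and length. One of them is a factor of the reduced word
`ω.eraseIdx u`, so both are reduced, while the segment itself equals its two-endpoint deletion
in `W` and is not reduced.
-/

theorem length_wordSegment {ω : List B} {a b : ℕ} (hab : a ≤ b) (hb : b < ω.length) :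
    (wordSegment ω a b).length = b - a + 1 := by
  simp only [wordSegment, List.length_take, List.length_drop]
  omega

theorem wordSegment_tail (ω : List B) (a b : ℕ) :
    (wordSegment ω a b).tail = (ω.drop (a + 1)).take (b - a) := by
  rw [wordSegment, ← List.drop_one, List.drop_take, List.drop_drop, Nat.add_sub_cancel,
    Nat.add_comm]

theorem wordSegment_dropLast (ω : List B) {a b : ℕ} (hab : a ≤ b) (hb : b < ω.length) :
    (wordSegment ω a b).dropLast = (ω.drop a).take (b - a) := by
  rw [List.dropLast_eq_take, wordSegment, List.take_take, List.length_take, List.length_drop]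
  congr 1
  omega

theorem eraseIdx_eq_take_append_wordSegment_tail (ω : List B) {a b : ℕ} (hab : a ≤ b) :
    ω.eraseIdx a = ω.take a ++ (wordSegment ω a b).tail ++ ω.drop (b + 1) := by
  rw [List.eraseIdx_eq_take_drop_succ, wordSegment_tail, List.append_assoc]
  conv_lhs => rw [← List.take_append_drop (b - a) (ω.drop (a + 1)), List.drop_drop]
  rw [show a + 1 + (b - a) = b + 1 by omega]

theorem eraseIdx_eq_take_append_wordSegment_dropLast (ω : List B) {a b : ℕ} (hab : a ≤ b)
    (hb : b < ω.length) :
    ω.eraseIdx b = ω.take a ++ (wordSegment ω a b).dropLast ++ ω.drop (b + 1) := by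
  rw [List.eraseIdx_eq_take_drop_succ, wordSegment_dropLast ω hab hb, ← List.take_add,
    Nat.add_sub_cancel' hab]

theorem List.exists_ne_getElem_eq_of_even_count {α : Type*} [DecidableEq α] {l : List α} {u : ℕ}
    (hu : u < l.length) (h : Even (l.count l[u])) :
    ∃ v, ∃ hv : v < l.length, v ≠ u ∧ l[v] = l[u] := by
  have hcount : l.count l[u] = (l.take u).count l[u] + (l.drop (u + 1)).count l[u] + 1 := by
    have hsplit : l.take u ++ l[u] :: l.drop (u + 1) = l := by
      rw [List.getElem_cons_drop, List.take_append_drop]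
    rw [← congrArg (List.count l[u]) hsplit, List.count_append, List.count_cons_self]
    omega
  have hmem : l[u] ∈ l.take u ∨ l[u] ∈ l.drop (u + 1) := by
    by_contra! hnot
    rw [hcount, List.count_eq_zero_of_not_mem hnot.1, List.count_eq_zero_of_not_mem hnot.2] at h
    exact Nat.not_even_one h
  rcases hmem with hmem | hmem
  · obtain ⟨v, hv, hvu⟩ := List.mem_take_iff_getElem.mp hmem
    exact ⟨v, by omega, by omega, hvu⟩
  · obtain ⟨v, hv, hvu⟩ := List.mem_drop_iff_getElem.mp hmem
    exact ⟨u + 1 + v, by omega, by omega, hvu⟩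

namespace CoxeterSystem

variable (cs : CoxeterSystem M W)

local prefix:100 "s " => cs.simple
local prefix:100 "π " => cs.wordProd
local prefix:100 "ris " => cs.rightInvSeq
local prefix:100 "lis " => cs.leftInvSeq

theorem IsReduced.infix {cs : CoxeterSystem M W} {ω ω' : List B} (hω : cs.IsReduced ω)
    (h : ω' <:+: ω) : cs.IsReduced ω' := by
  obtain ⟨l₁, l₂, rfl⟩ := h
  simpa [List.take_left'] using (hω.drop l₁.length).take ω'.length

theorem prod_map_alternatingWord_two_mul {G : Type*} [Monoid G] (f : B → G) (i j : B) (m : ℕ) :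
    ((alternatingWord i j (2 * m)).map f).prod = (f i * f j) ^ m := by
  induction m with
  | zero => simp [alternatingWord]
  | succ m ih =>
    rw [Nat.mul_succ, alternatingWord_succ', alternatingWord_succ']
    simp [ih, pow_succ', mul_assoc]

theorem alternatingWord_two_mul_reverse (i j : B) (m : ℕ) :
    (alternatingWord i j (2 * m)).reverse = alternatingWord j i (2 * m) := by
  induction m with
  | zero => simp [alternatingWord]
  | succ m ih =>
    rw [Nat.mul_succ, alternatingWord_succ', alternatingWord_succ', alternatingWord_succ,
      alternatingWord_succ]
    simp [ih]

theorem wordProd_alternatingWord_braid (i j : B) :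
    π (alternatingWord i j (2 * M i j)) = 1 := by
  rw [prod_alternatingWord_eq_mul_pow]
  simp

theorem getElem_leftInvSeq_alternatingWord_eq_mul_pow (i j : B) (p k : ℕ) (h : k < 2 * p) :
    (lis (alternatingWord i j (2 * p)))[k]'(by simp; omega) = s i * (s j * s i) ^ k := by
  rw [getElem_leftInvSeq_alternatingWord cs i j p k h, prod_alternatingWord_eq_mul_pow]
  simp [Nat.mul_add_div]

theorem leftInvSeq_alternatingWord_braid (i j : B) :
    lis (alternatingWord i j (2 * M i j)) =
      (lis (alternatingWord i j (2 * M i j))).take (M i j) ++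
        (lis (alternatingWord i j (2 * M i j))).take (M i j) := by
  apply List.ext_getElem (by simp; omega)
  intro k hk _
  simp only [length_leftInvSeq, length_alternatingWord] at hk
  rcases lt_or_ge k (M i j) with hkM | hkM
  · rw [List.getElem_append_left (by simp; omega), List.getElem_take]
  · rw [List.getElem_append_right (by simp; omega), List.getElem_take,
      getElem_leftInvSeq_alternatingWord_eq_mul_pow cs i j _ k hk,
      getElem_leftInvSeq_alternatingWord_eq_mul_pow cs i j _ _ (by simp; omega)]
    simp only [List.length_take, length_leftInvSeq, length_alternatingWord,
      min_eq_left (by omega : M i j ≤ 2 * M i j)]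
    conv_lhs => rw [← Nat.sub_add_cancel hkM, pow_add, simple_mul_simple_pow', mul_one]

section SignedConjugation

variable [DecidableEq W]

def signedConj (i : B) (p : W × ZMod 2) : W × ZMod 2 :=
  (s i * p.1 * s i, if p.1 = s i then p.2 + 1 else p.2)

theorem signedConj_involutive (i : B) : Function.Involutive (cs.signedConj i) := by
  rintro ⟨w, ε⟩
  by_cases hw : w = s i
  · simp [signedConj, hw, add_assoc, CharTwo.add_self_eq_zero]
  · simp [signedConj, hw, mul_assoc, mul_eq_one_iff_eq_inv]

def signedConjPerm (i : B) : Equiv.Perm (W × ZMod 2) := (cs.signedConj_involutive i).toPerm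

theorem prod_map_signedConjPerm_apply (ω : List B) (w : W) (ε : ZMod 2) :
    (ω.map cs.signedConjPerm).prod (w, ε) = (π ω * w * (π ω)⁻¹, ε + (ris ω).count w) := by
  induction ω with
  | nil => simp
  | cons i ω ih =>
    have hflip : π ω * w * (π ω)⁻¹ = s i ↔ (π ω)⁻¹ * s i * π ω = w := by
      rw [eq_comm (b := w), ← eq_mul_inv_iff_mul_eq, ← eq_inv_mul_iff_mul_eq, inv_inv, mul_assoc]
    simp only [List.map_cons, List.prod_cons, Equiv.Perm.mul_apply, ih, signedConjPerm,
      Function.Involutive.coe_toPerm, signedConj, wordProd_cons, rightInvSeq, List.count_cons,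
      hflip, beq_iff_eq]
    ext
    · simp [mul_assoc]
    · split_ifs <;> simp [add_assoc]

theorem even_count_rightInvSeq_alternatingWord_braid (i j : B) (t : W) :
    Even ((ris (alternatingWord i j (2 * M i j))).count t) := by
  rw [← alternatingWord_two_mul_reverse, rightInvSeq_reverse, List.count_reverse, M.symmetric,
    leftInvSeq_alternatingWord_braid, List.count_append]
  exact Even.add_self _

theorem isLiftable_signedConjPerm : M.IsLiftable cs.signedConjPerm := by
  intro i j
  ext1 ⟨w, ε⟩
  rw [← prod_map_alternatingWord_two_mul, prod_map_signedConjPerm_apply,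
    wordProd_alternatingWord_braid,
    (cs.even_count_rightInvSeq_alternatingWord_braid i j w).natCast_zmod_two]
  simp

theorem natCast_count_rightInvSeq_eq_of_wordProd_eq {ω ω' : List B} (h : π ω = π ω') (t : W) :
    ((ris ω).count t : ZMod 2) = (ris ω').count t := by
  have hlift (ω : List B) :
      cs.lift ⟨_, cs.isLiftable_signedConjPerm⟩ (π ω) = (ω.map cs.signedConjPerm).prod := by
    simp [wordProd, map_list_prod, Function.comp_def]
  have := congrArg (fun w ↦ (cs.lift ⟨_, cs.isLiftable_signedConjPerm⟩ w (t, 0)).2) h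
  simpa only [hlift, prod_map_signedConjPerm_apply, zero_add] using this

theorem even_count_rightInvSeq_of_not_isRightInversion {ω : List B} {t : W}
    (ht : ¬ cs.IsRightInversion (π ω) t) : Even ((ris ω).count t) := by
  obtain ⟨ρ, hρ, hρω⟩ := cs.exists_isReduced (π ω)
  have hcount : (ris ρ).count t = 0 :=
    List.count_eq_zero.mpr fun hmem ↦ ht (hρω ▸ cs.isRightInversion_of_mem_rightInvSeq hρ hmem)
  rw [← ZMod.natCast_eq_zero_iff_even, cs.natCast_count_rightInvSeq_eq_of_wordProd_eq hρω,
    hcount, Nat.cast_zero]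

end SignedConjugation

theorem not_isReduced_of_wordProd_tail_eq_dropLast {ω : List B} (hω : 2 ≤ ω.length)
    (h : π ω.tail = π ω.dropLast) : ¬ cs.IsReduced ω := by
  obtain ⟨i, ω', rfl⟩ := List.exists_cons_of_length_pos (by omega : 0 < ω.length)
  have hω' : ω' ≠ [] := by rintro rfl; simp at hω
  rw [List.tail_cons, List.dropLast_cons_of_ne_nil hω', wordProd_cons] at h
  have hprod : π (i :: ω') = π ω'.dropLast := by
    rw [wordProd_cons, h, ← mul_assoc, simple_mul_simple_self, one_mul]
  intro hred
  have := cs.length_wordProd_le ω'.dropLast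
  rw [← hprod, hred.eq, List.length_dropLast, List.length_cons] at this
  omega

theorem isDeletionPair_of_wordProd_eraseIdx_eq {ω : List B} {a b : ℕ} (hab : a < b)
    (hb : b < ω.length) (h : π (ω.eraseIdx a) = π (ω.eraseIdx b))
    (hred : cs.IsReduced (ω.eraseIdx a) ∨ cs.IsReduced (ω.eraseIdx b)) :
    IsDeletionPair cs ω a b := by
  have hsplit_a := eraseIdx_eq_take_append_wordSegment_tail ω hab.le
  have hsplit_b := eraseIdx_eq_take_append_wordSegment_dropLast ω hab.le hb
  have hprod : π (wordSegment ω a b).tail = π (wordSegment ω a b).dropLast := by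
    rw [hsplit_a, hsplit_b] at h
    simpa [wordProd_append] using h
  have hreduced_iff : cs.IsReduced (wordSegment ω a b).tail ↔
      cs.IsReduced (wordSegment ω a b).dropLast := by
    rw [IsReduced, IsReduced, hprod, List.length_tail, List.length_dropLast]
  have htail : cs.IsReduced (wordSegment ω a b).tail := by
    rcases hred with hred | hred
    · exact hred.infix (hsplit_a ▸ List.infix_append _ _ _)
    · exact hreduced_iff.mpr (hred.infix (hsplit_b ▸ List.infix_append _ _ _))
  refine ⟨hab, hb, ?_, htail, hreduced_iff.mp htail⟩
  exact cs.not_isReduced_of_wordProd_tail_eq_dropLast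
    (by rw [length_wordSegment hab.le hb]; omega) hprod

end CoxeterSystem

/-- If a word `ω` is not reduced but deleting the single letter at
position `u` yields a reduced word, then the letter at position `u` belongs to a deletion
pair of `ω`: there is a position `v ≠ u` such that the segment between `min u v` and
`max u v` is not reduced while deleting either endpoint of that segment gives a reduced
word. -/
theorem mem_deletionPair (cs : CoxeterSystem M W) (ω : List B) (u : ℕ)
    (hu : u < ω.length)
    (hnred : ¬ cs.IsReduced ω)
    (hred : cs.IsReduced (ω.eraseIdx u)) :
    ∃ v < ω.length, v ≠ u ∧ IsDeletionPair cs ω (min u v) (max u v) := by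
  classical
  have hu' : u < (cs.rightInvSeq ω).length := by rwa [cs.length_rightInvSeq]
  set t := (cs.rightInvSeq ω)[u]
  have hωt : cs.wordProd ω * t = cs.wordProd (ω.eraseIdx u) := by
    rw [← cs.wordProd_mul_getD_rightInvSeq, List.getD_eq_getElem _ 1 hu']
  have hnot_inv : ¬ cs.IsRightInversion (cs.wordProd ω) t := by
    rintro ⟨-, hlt⟩
    have := cs.length_wordProd_le ω
    rw [hωt, hred.eq, List.length_eraseIdx_of_lt hu] at hlt
    exact hnred (by unfold CoxeterSystem.IsReduced; omega)
  obtain ⟨v, hv, hvu, hvt⟩ := List.exists_ne_getElem_eq_of_even_count hu'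
    (cs.even_count_rightInvSeq_of_not_isRightInversion hnot_inv)
  have heq : cs.wordProd (ω.eraseIdx u) = cs.wordProd (ω.eraseIdx v) := by
    rw [← hωt, ← cs.wordProd_mul_getD_rightInvSeq, List.getD_eq_getElem _ 1 hv, hvt]
  rw [cs.length_rightInvSeq] at hv
  refine ⟨v, hv, hvu, ?_⟩
  rcases lt_or_gt_of_ne hvu with hvu | huv
  · rw [min_eq_right hvu.le, max_eq_left hvu.le]
    exact cs.isDeletionPair_of_wordProd_eraseIdx_eq hvu hu heq.symm (Or.inr hred)
  · rw [min_eq_left huv.le, max_eq_right huv.le]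
    exact cs.isDeletionPair_of_wordProd_eraseIdx_eq huv hv heq (Or.inl hred)
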